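/- arXiv:1007.4330 — 3 statements merged into one kernel-verified Lean document; each statement's English description precedes it below -/
import Mathlib

section
/- For every I ∈ 𝒟⁰ and every choice of parameters r ∈ ℤ₊, γ ∈ (0,1/2): the function β ↦ 1_{good}(I ∔ β) is measurable with respect to the σ-algebra generated by the coordinates (β_j : 2^{−j} ≥ ℓ(I)); the probability π_good := P_β(I ∔ β is good) does not depend on I; and for every bounded random variable X on ({0,1}^N)^ℤ measurable with respect to the σ-algebra generated by (β_j : 2^{−j} < ℓ(I)), one has E_β[X · 1_{good}(I ∔ β)] = π_good · E_β[X]. -/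
open MeasureTheory
open scoped ENNReal

noncomputable section

/-- Points of `ℝ^N` with the `ℓ^∞` (sup) metric, as `Fin N → ℝ`. -/
abbrev Euc (N : ℕ) := Fin N → ℝ

/-- The axis-parallel half-open cube with lower-left corner `c` and sidelength `l`. -/
def cube {N : ℕ} (c : Euc N) (l : ℝ) : Set (Euc N) :=
  {x | ∀ i, c i ≤ x i ∧ x i < c i + l}

/-- Binary sequences `β = (β_j)_{j ∈ ℤ}` with `β_j ∈ {0,1}^N`, parametrising the
translated dyadic systems. -/
abbrev BSeq (N : ℕ) := ℤ → Fin N → Bool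

/-- The translation `Σ_{j > k} 2^{-j} β_j` applied to dyadic cubes of sidelength `2^{-k}`. -/
def betaShift {N : ℕ} (β : BSeq N) (k : ℤ) : Euc N :=
  fun i => ∑' j : {j : ℤ // k < j}, (2 : ℝ) ^ (-(j : ℤ)) * (if β j i then 1 else 0)

/-- The cube `I ∔ β` of the translated dyadic system `𝒟^β`, where `I ∈ 𝒟⁰` has
sidelength `2^{-k}` and lower-left corner `2^{-k}·p`, `p ∈ ℤ^N`. -/
def dyCube {N : ℕ} (β : BSeq N) (k : ℤ) (p : Fin N → ℤ) : Set (Euc N) :=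
  cube (fun i => (p i : ℝ) * (2 : ℝ) ^ (-k) + betaShift β k i) ((2 : ℝ) ^ (-k))

/-- The distance between two sets in the `ℓ^∞` metric of `ℝ^N`. -/
def setDist {N : ℕ} (A B : Set (Euc N)) : ℝ :=
  sInf (Set.image2 dist A B)

/-- The cube `I ∔ β ∈ 𝒟^β` (of sidelength `2^{-k}` and position `p`) is good with
parameters `r, γ`: for every `J ∈ 𝒟^β` with `ℓ(J) ≥ 2^r ℓ(I)` one has
`dist(I, ∂J) > ℓ(I)^γ ℓ(J)^{1-γ}` (`ℓ^∞` distances). -/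
def IsGoodCube {N : ℕ} (r : ℕ) (γ : ℝ) (β : BSeq N) (k : ℤ) (p : Fin N → ℤ) : Prop :=
  ∀ (k' : ℤ) (p' : Fin N → ℤ), k' + (r : ℤ) ≤ k →
    ((2:ℝ) ^ (-k)) ^ γ * ((2:ℝ) ^ (-k')) ^ (1 - γ) <
      setDist (dyCube β k p) (frontier (dyCube β k' p'))

/-- `P` is the canonical product probability measure on `({0,1}^N)^ℤ` making the
coordinates `β_j` independent and uniformly distributed on `{0,1}^N`. -/
def IsBernoulli {N : ℕ} (P : Measure (BSeq N)) : Prop :=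
  IsProbabilityMeasure P ∧
    ∀ (s : Finset ℤ) (b : ℤ → Fin N → Bool),
      P {β | ∀ j ∈ s, β j = b j} = ((2 : ℝ≥0∞) ^ N)⁻¹ ^ s.card

/-- The σ-algebra on `({0,1}^N)^ℤ` generated by the coordinates `β_j`, `j > k`
(i.e. `2^{-j} < 2^{-k}`). -/
def coordGT (N : ℕ) (k : ℤ) : MeasurableSpace (BSeq N) :=
  MeasurableSpace.comap (fun (β : BSeq N) (j : {j : ℤ // k < j}) => β j) inferInstance

/-- The σ-algebra on `({0,1}^N)^ℤ` generated by the coordinates `β_j`, `j ≤ k`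
(i.e. `2^{-j} ≥ 2^{-k}`). -/
def coordLE (N : ℕ) (k : ℤ) : MeasurableSpace (BSeq N) :=
  MeasurableSpace.comap (fun (β : BSeq N) (j : {j : ℤ // j ≤ k}) => β j) inferInstance

/-!
Goodness of `I ∔ β` is a condition on each coarser cube `J` separately, and `dist(I, ∂J)` only
depends on the relative position of `I` in the translated lattice of scale `ℓ(J)`, that is on the
digits `β_j` with `ℓ(J) < 2^{-j} ≤ ℓ(I)`. This gives the measurability, and the independence of
the coordinates of `β` then gives the product formula.

For the equality of probabilities, `relocate` turns `β` into `β'` such that a similarity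
`x ↦ 2^{k-k'} x + v` carries `𝒟^β` onto `𝒟^{β'}` and `I ∔ β` onto `I' ∔ β'`: above the scale of
`I'` the digits are reindexed, below it the translation by `(p' - p) 2^{-k'}` is absorbed by a
2-adic addition of `p' - p` to the digits. Goodness is invariant under similarities, and
`relocate` preserves the Bernoulli measure because on every finite window of scales it acts as a
bijection of the digits.
-/

open ProbabilityTheory

/-- The carry into position `t` when the integer `a` is added to the 2-adic integer
`Σ_t 2^t x_t`; `addDigits a x` are the digits of the sum. -/
def addCarry (a : ℤ) (x : ℕ → Bool) : ℕ → ℤ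
  | 0 => a
  | t + 1 => (addCarry a x t + if x t then 1 else 0) / 2

def addDigits (a : ℤ) (x : ℕ → Bool) (t : ℕ) : Bool :=
  (addCarry a x t + if x t then 1 else 0) % 2 = 1

lemma addCarry_add_eq (a : ℤ) (x : ℕ → Bool) (t : ℕ) :
    addCarry a x t + (if x t then 1 else 0)
      = 2 * addCarry a x (t + 1) + if addDigits a x t then 1 else 0 := by
  simp only [addCarry, addDigits, decide_eq_true_eq]
  split_ifs <;> omega

theorem add_sum_eq_addCarry_add_sum_addDigits (a : ℤ) (x : ℕ → Bool) (s : ℕ) :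
    a + ∑ t ∈ Finset.range s, 2 ^ t * (if x t then 1 else 0)
      = 2 ^ s * addCarry a x s
        + ∑ t ∈ Finset.range s, 2 ^ t * if addDigits a x t then 1 else 0 := by
  induction s with
  | zero => simp [addCarry]
  | succ s ih =>
    rw [Finset.sum_range_succ, Finset.sum_range_succ, ← add_assoc, ih]
    linear_combination (2 : ℤ) ^ s * addCarry_add_eq a x s

lemma addCarry_congr (a : ℤ) {x x' : ℕ → Bool} {s : ℕ} (h : ∀ t < s, x t = x' t) :
    addCarry a x s = addCarry a x' s := by
  induction s with
  | zero => rfl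
  | succ s ih => simp only [addCarry, ih fun t ht => h t (by omega), h s (by omega)]

theorem addDigits_eq_iff (a : ℤ) {x x' : ℕ → Bool} {s : ℕ} :
    (∀ t < s, addDigits a x t = addDigits a x' t) ↔ ∀ t < s, x t = x' t := by
  refine ⟨fun h => ?_, fun h t ht => ?_⟩
  · intro t
    induction t using Nat.strong_induction_on with
    | _ t ih =>
      intro ht
      have hc := addCarry_congr a (s := t) fun u hu => ih u hu (by omega)
      have hd := h t ht
      simp only [addDigits, hc, decide_eq_decide] at hd
      revert hd; cases x t <;> cases x' t <;> simp <;> omega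
  · rw [addDigits, addDigits, addCarry_congr a (s := t) fun u hu => h u (by omega), h t ht]

section
variable {N : ℕ}

lemma summable_betaShift_terms (β : BSeq N) (c : ℤ) (i : Fin N) :
    Summable fun n : ℕ => (2 : ℝ) ^ (-(c + 1 + n)) * if β (c + 1 + n) i then 1 else 0 := by
  refine .of_nonneg_of_le (fun n => by positivity) (fun n => ?_)
    ((summable_geometric_two).mul_left ((2 : ℝ) ^ (-(c + 1))))
  have h2 : (2 : ℝ) ^ (-(c + 1 + n)) = 2 ^ (-(c + 1)) * (1 / 2) ^ n := by
    rw [neg_add, zpow_add₀ two_ne_zero, zpow_neg (2 : ℝ) n, zpow_natCast, one_div_pow, one_div]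
  rw [h2]
  split_ifs <;> simp [zpow_nonneg]

lemma betaShift_eq_tsum_nat (β : BSeq N) (c : ℤ) (i : Fin N) :
    betaShift β c i
      = ∑' n : ℕ, (2 : ℝ) ^ (-(c + 1 + n)) * if β (c + 1 + n) i then 1 else 0 := by
  let e : ℕ ≃ {j : ℤ // c < j} :=
    { toFun n := ⟨c + 1 + n, by omega⟩
      invFun j := (j - c - 1).toNat
      left_inv n := by simp only; omega
      right_inv j := Subtype.ext (by have := j.2; simp; omega) }
  exact (e.tsum_eq fun j => (2 : ℝ) ^ (-(j : ℤ)) * if β j i then 1 else 0).symm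

lemma betaShift_sub_one (β : BSeq N) (c : ℤ) (i : Fin N) :
    betaShift β (c - 1) i = (2 : ℝ) ^ (-c) * (if β c i then 1 else 0) + betaShift β c i := by
  have h := summable_betaShift_terms β (c - 1) i
  rw [betaShift_eq_tsum_nat, betaShift_eq_tsum_nat, h.tsum_eq_zero_add]
  congr 2 <;> simp only [Nat.cast_zero, Nat.cast_add, Nat.cast_one]
  · ring_nf
  · ring_nf
  · funext n; ring_nf

theorem betaShift_sub_natCast (β : BSeq N) (k : ℤ) (s : ℕ) (i : Fin N) :
    betaShift β (k - s) i = betaShift β k i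
      + (2 : ℝ) ^ (-k) * ∑ t ∈ Finset.range s, (2 : ℝ) ^ t * if β (k - t) i then 1 else 0 := by
  induction s with
  | zero => simp
  | succ s ih =>
    have h : (2 : ℝ) ^ (-(k - s)) = 2 ^ (-k) * 2 ^ s := by
      rw [← zpow_natCast, ← zpow_add₀ two_ne_zero]; ring_nf
    rw [Nat.cast_succ, ← sub_sub, betaShift_sub_one, ih, Finset.sum_range_succ, h]
    ring

theorem betaShift_eq_of_shift {β β' : BSeq N} {k k' : ℤ}
    (h : ∀ n : ℕ, β' (k' + 1 + n) = β (k + 1 + n)) (i : Fin N) :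
    betaShift β' k' i = (2 : ℝ) ^ (k - k') * betaShift β k i := by
  rw [betaShift_eq_tsum_nat, betaShift_eq_tsum_nat, ← tsum_mul_left]
  refine tsum_congr fun n => ?_
  rw [h, ← mul_assoc, ← zpow_add₀ two_ne_zero]
  ring_nf

def dilate (l : ℝ) (v : Euc N) (x : Euc N) : Euc N := l • x + v

lemma dilate_image_cube {l : ℝ} (hl : 0 < l) (v c : Euc N) (s : ℝ) :
    dilate l v '' cube c s = cube (dilate l v c) (l * s) := by
  ext y
  simp only [Set.mem_image, cube, Set.mem_ofPred_eq, dilate, Pi.add_apply, Pi.smul_apply,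
    smul_eq_mul]
  constructor
  · rintro ⟨x, hx, rfl⟩ i
    have := hx i
    simp only [Pi.add_apply, Pi.smul_apply, smul_eq_mul]
    constructor <;> nlinarith
  · intro hy
    refine ⟨l⁻¹ • (y - v), fun i => ?_, by ext i; simp [hl.ne']⟩
    have := hy i
    simp only [Pi.smul_apply, Pi.sub_apply, smul_eq_mul]
    constructor
    · rw [← mul_le_mul_iff_of_pos_left hl, ← mul_assoc, mul_inv_cancel₀ hl.ne']; linarith
    · rw [← mul_lt_mul_iff_of_pos_left hl, ← mul_assoc, mul_inv_cancel₀ hl.ne']; linarith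

lemma frontier_dilate_image {l : ℝ} (hl : l ≠ 0) (v : Euc N) (A : Set (Euc N)) :
    frontier (dilate l v '' A) = dilate l v '' frontier A :=
  (((Homeomorph.smulOfNeZero l hl).trans (Homeomorph.addRight v)).image_frontier A).symm

lemma setDist_dilate_image {l : ℝ} (hl : 0 ≤ l) (v : Euc N) (A B : Set (Euc N)) :
    setDist (dilate l v '' A) (dilate l v '' B) = l * setDist A B := by
  have hdist (a b : Euc N) : dist (dilate l v a) (dilate l v b) = l • dist a b := by
    rw [dilate, dilate, dist_add_right, dist_smul₀, Real.norm_of_nonneg hl, smul_eq_mul]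
  rw [setDist, setDist, Set.image2_image_left, Set.image2_image_right, ← smul_eq_mul,
    ← Real.sInf_smul_of_nonneg hl, ← Set.image_smul, Set.image_image2]
  exact congrArg sInf (Set.image2_congr fun a _ b _ => hdist a b)

lemma dyCube_eq_dilate_image {β β' : BSeq N} {k k' : ℤ} {p p' : Fin N → ℤ} {v : Euc N}
    (h : ∀ i, p' i * (2 : ℝ) ^ (-k') + betaShift β' k' i
      = 2 ^ (k - k') * (p i * 2 ^ (-k) + betaShift β k i) + v i) :
    dyCube β' k' p' = dilate (2 ^ (k - k')) v '' dyCube β k p := by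
  rw [dyCube, dyCube, dilate_image_cube (by positivity), ← zpow_add₀ two_ne_zero]
  congr 1
  · funext i; simp only [dilate, Pi.add_apply, Pi.smul_apply, smul_eq_mul, h]
  · ring_nf

lemma mul_rpow_mul_mul_rpow_one_sub {l a b : ℝ} (hl : 0 ≤ l) (ha : 0 ≤ a) (hb : 0 ≤ b)
    (γ : ℝ) : (l * a) ^ γ * (l * b) ^ (1 - γ) = l * (a ^ γ * b ^ (1 - γ)) := by
  rw [Real.mul_rpow hl ha, Real.mul_rpow hl hb, mul_mul_mul_comm,
    ← Real.rpow_add' hl (by norm_num), add_sub_cancel, Real.rpow_one]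

lemma isGoodCube_iff_forall_nat {r : ℕ} {γ : ℝ} {β : BSeq N} {k : ℤ} {p : Fin N → ℤ} :
    IsGoodCube r γ β k p ↔ ∀ s : ℕ, r ≤ s → ∀ q : Fin N → ℤ,
      ((2 : ℝ) ^ (-k)) ^ γ * ((2 : ℝ) ^ (-(k - s))) ^ (1 - γ)
        < setDist (dyCube β k p) (frontier (dyCube β (k - s) q)) := by
  refine ⟨fun h s hs q => h (k - s) q (by omega), fun h k' q hk' => ?_⟩
  obtain ⟨s, rfl⟩ : ∃ s : ℕ, k' = k - s := ⟨(k - k').toNat, by omega⟩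
  exact h s (by omega) q

theorem isGoodCube_iff_of_dilate {r : ℕ} {γ : ℝ} {β β' : BSeq N} {k k' : ℤ}
    {p p' : Fin N → ℤ} {v : Euc N}
    (hI : dyCube β' k' p' = dilate (2 ^ (k - k')) v '' dyCube β k p)
    (hJ : ∀ s : ℕ, ∃ E : Equiv.Perm (Fin N → ℤ), ∀ q,
      dyCube β' (k' - s) (E q) = dilate (2 ^ (k - k')) v '' dyCube β (k - s) q) :
    IsGoodCube r γ β k p ↔ IsGoodCube r γ β' k' p' := by
  have hl : (0 : ℝ) < 2 ^ (k - k') := by positivity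
  have hscale {j j' : ℤ} (h : j' = j - k + k') : (2 : ℝ) ^ (-j') = 2 ^ (k - k') * 2 ^ (-j) := by
    rw [← zpow_add₀ two_ne_zero, h]; ring_nf
  rw [isGoodCube_iff_forall_nat, isGoodCube_iff_forall_nat]
  refine forall_congr' fun s => imp_congr_right fun _ => ?_
  obtain ⟨E, hE⟩ := hJ s
  refine E.forall_congr fun q => ?_
  rw [hE, hI, frontier_dilate_image hl.ne', setDist_dilate_image hl.le,
    hscale (j := k) (j' := k') (by ring), hscale (j := k - s) (j' := k' - s) (by ring),
    mul_rpow_mul_mul_rpow_one_sub hl.le (by positivity) (by positivity),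
    mul_lt_mul_iff_right₀ hl]

lemma setDist_dyCube_congr {β β' : BSeq N} {k : ℤ} {s : ℕ}
    (h : ∀ t < s, β (k - t) = β' (k - t)) (p q : Fin N → ℤ) :
    setDist (dyCube β' k p) (frontier (dyCube β' (k - s) q))
      = setDist (dyCube β k p) (frontier (dyCube β (k - s) q)) := by
  set v : Euc N := fun i => betaShift β' k i - betaShift β k i
  have hI : dyCube β' k p = dilate (2 ^ (k - k)) v '' dyCube β k p :=
    dyCube_eq_dilate_image fun i => by simp only [v, sub_self, zpow_zero]; ring
  have hJ : dyCube β' (k - s) q = dilate (2 ^ (k - s - (k - s))) v '' dyCube β (k - s) q := by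
    refine dyCube_eq_dilate_image fun i => ?_
    have hsum : ∑ t ∈ Finset.range s, (2 : ℝ) ^ t * (if β' (k - t) i then 1 else 0)
        = ∑ t ∈ Finset.range s, (2 : ℝ) ^ t * if β (k - t) i then 1 else 0 :=
      Finset.sum_congr rfl fun t ht => by rw [h t (Finset.mem_range.1 ht)]
    rw [betaShift_sub_natCast, betaShift_sub_natCast, hsum, sub_self, zpow_zero]
    ring
  rw [sub_self, zpow_zero] at hI hJ
  rw [hI, hJ, frontier_dilate_image one_ne_zero, setDist_dilate_image zero_le_one, one_mul]

lemma coordLE_le (k : ℤ) : coordLE N k ≤ (inferInstance : MeasurableSpace (BSeq N)) :=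
  (measurable_pi_lambda (fun (β : BSeq N) (j : {j : ℤ // j ≤ k}) => β j)
    fun _ => measurable_pi_apply _).comap_le

lemma coordGT_le (k : ℤ) : coordGT N k ≤ (inferInstance : MeasurableSpace (BSeq N)) :=
  (measurable_pi_lambda (fun (β : BSeq N) (j : {j : ℤ // k < j}) => β j)
    fun _ => measurable_pi_apply _).comap_le

lemma comap_restrict_eq_iSup (q : ℤ → Prop) :
    MeasurableSpace.comap (fun (β : BSeq N) (j : {j // q j}) => β j) inferInstance
      = ⨆ j ∈ {j | q j}, MeasurableSpace.comap (fun β : BSeq N => β j) inferInstance := by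
  rw [MeasurableSpace.pi, MeasurableSpace.comap_iSup, iSup_subtype']
  simp only [MeasurableSpace.comap_comp]
  rfl

lemma measurableSet_coordLE_of_dependsOn {k : ℤ} {A : Set (BSeq N)} {s : Finset ℤ}
    (hs : ∀ j ∈ s, j ≤ k) (hA : DependsOn (· ∈ A) (s : Set ℤ)) :
    MeasurableSet[coordLE N k] A := by
  have hρ : Measurable[coordLE N k] (s.restrict : BSeq N → (s → Fin N → Bool)) := by
    have hcoord : Measurable[coordLE N k] fun (β : BSeq N) (j : {j : ℤ // j ≤ k}) => β j :=
      comap_measurable _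
    exact (measurable_pi_lambda _ fun j : s => measurable_pi_apply ⟨j, hs j j.2⟩).comp hcoord
  have hA' : A = s.restrict ⁻¹' (s.restrict '' A) := by
    refine (Set.subset_preimage_image _ _).antisymm fun β ⟨β', hβ', hrestrict⟩ => ?_
    have : (β' ∈ A) = (β ∈ A) := hA fun j hj => congrFun hrestrict ⟨j, hj⟩
    exact this ▸ hβ'
  rw [hA']
  exact hρ (Set.toFinite _).measurableSet

theorem measurableSet_isGoodCube (r : ℕ) (γ : ℝ) (k : ℤ) (p : Fin N → ℤ) :
    MeasurableSet[coordLE N k] {β : BSeq N | IsGoodCube r γ β k p} := by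
  simp only [isGoodCube_iff_forall_nat, Set.ofPred_forall]
  refine .iInter fun s => .iInter fun _ => .iInter fun q =>
    measurableSet_coordLE_of_dependsOn (s := Finset.Ioc (k - s) k)
      (fun j hj => (Finset.mem_Ioc.1 hj).2) fun β β' h => ?_
  simp only [Set.mem_ofPred_eq]
  rw [setDist_dyCube_congr (β := β) (β' := β') (fun t ht => h _ (by simp; omega))]

lemma exists_bijective_restrict_comp {Φ : BSeq N → BSeq N} {s t : Finset ℤ}
    (hcard : t.card = s.card)
    (hΦ : ∀ β β', (∀ j ∈ s, Φ β j = Φ β' j) ↔ ∀ j ∈ t, β j = β' j) :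
    ∃ G : (t → Fin N → Bool) → (s → Fin N → Bool),
      Function.Bijective G ∧ ∀ β, s.restrict (Φ β) = G (t.restrict β) := by
  classical
  let extend (f : t → Fin N → Bool) : BSeq N := fun j =>
    if h : j ∈ t then f ⟨j, h⟩ else fun _ => false
  have hextend (f : t → Fin N → Bool) (j : ℤ) (hj : j ∈ t) : extend f j = f ⟨j, hj⟩ := dif_pos hj
  refine ⟨fun f => s.restrict (Φ (extend f)), ?_, fun β => ?_⟩
  · refine (Fintype.bijective_iff_injective_and_card _).2 ⟨fun f f' hff' => ?_, by simp [hcard]⟩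
    have := (hΦ (extend f) (extend f')).1 fun j hj => congrFun hff' ⟨j, hj⟩
    funext ⟨j, hj⟩
    rw [← hextend f j hj, ← hextend f' j hj, this j hj]
  · funext ⟨j, hj⟩
    exact (hΦ β _).2 (fun j hj => (hextend (t.restrict β) j hj).symm) j hj

end

theorem ProbabilityTheory.Indep.integral_mul_indicator {Ω : Type*} {m₁ m₂ mΩ : MeasurableSpace Ω}
    {μ : Measure Ω} (hm₁ : m₁ ≤ mΩ) (hm₂ : m₂ ≤ mΩ) (h : Indep m₁ m₂ μ) {X : Ω → ℝ}
    (hX : Measurable[m₁] X) {G : Set Ω} (hG : MeasurableSet[m₂] G) :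
    ∫ ω, X ω * G.indicator (fun _ => (1 : ℝ)) ω ∂μ = (μ G).toReal * ∫ ω, X ω ∂μ := by
  have hY : Measurable[m₂] (G.indicator fun _ => (1 : ℝ)) := measurable_const.indicator hG
  have hXY : IndepFun X (G.indicator fun _ => (1 : ℝ)) μ := by
    rw [IndepFun_iff_Indep]
    exact indep_of_indep_of_le_left (indep_of_indep_of_le_right h hY.comap_le) hX.comap_le
  rw [← Pi.mul_def, hXY.integral_mul_eq_mul_integral (hX.mono hm₁ le_rfl).aestronglyMeasurable
    (hY.mono hm₂ le_rfl).aestronglyMeasurable, integral_indicator_const _ (hm₂ _ hG)]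
  simp [Measure.real, mul_comm]

namespace IsBernoulli
variable {N : ℕ} {P : Measure (BSeq N)}

theorem measure_cylinder (hP : IsBernoulli P) (s : Finset ℤ)
    (S : Set (s → Fin N → Bool)) :
    P (cylinder s S) = S.ncard * ((2 : ℝ≥0∞) ^ N)⁻¹ ^ s.card := by
  classical
  have hpoint (c : s → Fin N → Bool) : P (cylinder s {c}) = ((2 : ℝ≥0∞) ^ N)⁻¹ ^ s.card := by
    convert hP.2 s fun j => if h : j ∈ s then c ⟨j, h⟩ else fun _ => false using 2
    ext β
    simp +contextual [funext_iff]
  have hunion : cylinder s S = ⋃ c ∈ S.toFinset, (cylinder s {c} : Set (BSeq N)) := by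
    ext; simp
  rw [hunion, measure_biUnion_finset, Finset.sum_congr rfl fun c _ => hpoint c,
    Finset.sum_const, nsmul_eq_mul, Set.ncard_eq_toFinset_card']
  · intro c _ c' _ hne
    exact Set.disjoint_left.2 fun β hc hc' => hne (hc.symm.trans hc')
  · exact fun c _ => MeasurableSet.cylinder s (measurableSet_singleton c)

theorem measurePreserving (hP : IsBernoulli P) {Φ : BSeq N → BSeq N}
    (hΦ : ∀ u : Finset ℤ, ∃ s t : Finset ℤ, u ⊆ s ∧ t.card = s.card ∧
      ∀ β β', (∀ j ∈ s, Φ β j = Φ β' j) ↔ ∀ j ∈ t, β j = β' j) :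
    MeasurePreserving Φ P P := by
  have := hP.1
  have hmeas : Measurable Φ := by
    refine measurable_pi_iff.2 fun j => ?_
    obtain ⟨s, t, hjs, hcard, hiff⟩ := hΦ {j}
    obtain ⟨G, -, hG⟩ := exists_bijective_restrict_comp hcard hiff
    have hjs : j ∈ s := hjs (Finset.mem_singleton_self j)
    have : (fun β => Φ β j) = (fun g => g ⟨j, hjs⟩) ∘ G ∘ t.restrict :=
      funext fun β => congrFun (hG β) ⟨j, hjs⟩
    rw [this]
    exact (measurable_pi_apply _).comp
      ((measurable_of_finite G).comp (Finset.measurable_restrict t))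
  have := Measure.isProbabilityMeasure_map (μ := P) hmeas.aemeasurable
  refine ⟨hmeas, ext_of_generate_finite _ generateFrom_measurableCylinders.symm
    isPiSystem_measurableCylinders (fun A hA => ?_) (by simp)⟩
  obtain ⟨u, S, -, rfl⟩ := (mem_measurableCylinders A).1 hA
  obtain ⟨s, t, hus, hcard, hiff⟩ := hΦ u
  obtain ⟨G, hGbij, hG⟩ := exists_bijective_restrict_comp hcard hiff
  set S' := Finset.restrict₂ (π := fun _ => Fin N → Bool) hus ⁻¹' S
  have hcyl : cylinder (α := fun _ : ℤ => Fin N → Bool) u S = cylinder s S' := rfl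
  have hpre : Φ ⁻¹' cylinder s S' = cylinder t (G ⁻¹' S') := by
    ext β
    simp only [Set.mem_preimage, mem_cylinder, hG]
  rw [Measure.map_apply hmeas ((Set.toFinite _).measurableSet.cylinder u), hcyl, hpre,
    hP.measure_cylinder, hP.measure_cylinder, hcard,
    Set.ncard_preimage_of_injective_subset_range hGbij.injective
      (by simp [hGbij.surjective.range_eq])]

theorem iIndepFun_eval (hP : IsBernoulli P) :
    iIndepFun (fun j (β : BSeq N) => β j) P := by
  have := hP.1
  refine iIndepFun_iff_finset.2 fun s => (iIndepFun_iff_map_fun_eq_pi_map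
    fun j => (measurable_pi_apply _).aemeasurable).2 (Measure.ext_iff_singleton.2 fun c => ?_)
  have hcoord (j : ℤ) (b : Fin N → Bool) : P.map (fun β : BSeq N => β j) {b}
      = ((2 : ℝ≥0∞) ^ N)⁻¹ := by
    rw [Measure.map_apply (measurable_pi_apply j) (measurableSet_singleton b)]
    convert hP.2 {j} fun _ => b using 2
    · ext β; simp
    · simp
  rw [Measure.map_apply (measurable_pi_lambda _ fun j => measurable_pi_apply _)
      (measurableSet_singleton c),
    Measure.pi_singleton]
  simp only [hcoord, Finset.prod_const, Finset.card_univ, Fintype.card_coe]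
  exact (hP.measure_cylinder s {c}).trans (by simp)

theorem indep_coordLE_coordGT (hP : IsBernoulli P) (k : ℤ) :
    Indep (coordLE N k) (coordGT N k) P := by
  rw [coordLE, coordGT, comap_restrict_eq_iSup, comap_restrict_eq_iSup]
  exact indep_iSup_of_disjoint (fun j => (measurable_pi_apply j).comap_le)
    ((iIndepFun_iff_iIndep _ _ _).1 hP.iIndepFun_eval)
    (Set.disjoint_left.2 fun j (h : j ≤ k) (h' : k < j) => (h.not_gt h').elim)

end IsBernoulli

section
variable {N : ℕ}

lemma forall_mem_Ioc_sub_add_iff (c : ℤ) (m : ℕ) (q : ℤ → Prop) :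
    (∀ j ∈ Finset.Ioc (c - m) (c + m), q j) ↔ (∀ n < m, q (c + 1 + n)) ∧ ∀ t < m, q (c - t) := by
  refine ⟨fun h => ⟨fun n hn => h _ (by simp; omega), fun t ht => h _ (by simp; omega)⟩,
    fun ⟨hup, hdown⟩ j hj => ?_⟩
  rw [Finset.mem_Ioc] at hj
  rcases lt_or_ge c j with hcj | hjc
  · obtain ⟨n, rfl⟩ : ∃ n : ℕ, j = c + 1 + n := ⟨(j - c - 1).toNat, by omega⟩
    exact hup n (by omega)
  · obtain ⟨t, rfl⟩ : ∃ t : ℕ, j = c - t := ⟨(c - j).toNat, by omega⟩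
    exact hdown t (by omega)

def relocate (k k' : ℤ) (p p' : Fin N → ℤ) (β : BSeq N) : BSeq N :=
  fun j i => if k' < j then β (j + (k - k')) i
    else addDigits (p' i - p i) (fun t => β (k - t) i) (k' - j).toNat

variable {k k' : ℤ} {p p' : Fin N → ℤ}

lemma relocate_add_one_add (β : BSeq N) (n : ℕ) :
    relocate k k' p p' β (k' + 1 + n) = β (k + 1 + n) := by
  funext i
  rw [relocate, if_pos (by omega)]
  ring_nf

lemma relocate_sub_natCast (β : BSeq N) (t : ℕ) (i : Fin N) :
    relocate k k' p p' β (k' - t) i = addDigits (p' i - p i) (fun t => β (k - t) i) t := by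
  rw [relocate, if_neg (by omega)]
  congr
  omega

theorem relocate_eqOn_Ioc_iff (m : ℕ) (β β' : BSeq N) :
    (∀ j ∈ Finset.Ioc (k' - m) (k' + m), relocate k k' p p' β j = relocate k k' p p' β' j)
      ↔ ∀ j ∈ Finset.Ioc (k - m) (k + m), β j = β' j := by
  simp only [forall_mem_Ioc_sub_add_iff, relocate_add_one_add, funext_iff, relocate_sub_natCast]
  refine and_congr_right' ⟨fun h t ht i => ?_, fun h t ht i => ?_⟩
  · exact (addDigits_eq_iff (p' i - p i)).1 (fun t ht => h t ht i) t ht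
  · exact (addDigits_eq_iff (p' i - p i)).2 (fun t ht => h t ht i) t ht

theorem IsBernoulli.measurePreserving_relocate {P : Measure (BSeq N)} (hP : IsBernoulli P) :
    MeasurePreserving (relocate k k' p p') P P := by
  refine hP.measurePreserving fun u => ?_
  set m := u.sup (fun j => (j - k').natAbs) + 1
  refine ⟨Finset.Ioc (k' - m) (k' + m), Finset.Ioc (k - m) (k + m), fun j hj => ?_,
    by simp [Int.card_Ioc], relocate_eqOn_Ioc_iff m⟩
  have := Finset.le_sup (f := fun j => (j - k').natAbs) hj
  simp only [Finset.mem_Ioc, m]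
  omega

theorem dyCube_relocate (β : BSeq N) (s : ℕ) (q : Fin N → ℤ) :
    dyCube (relocate k k' p p' β) (k' - s)
        (fun i => q i + addCarry (p' i - p i) (fun t => β (k - t) i) s)
      = dilate (2 ^ (k - k')) (fun i => ((p' i - p i : ℤ) : ℝ) * 2 ^ (-k'))
          '' dyCube β (k - s) q := by
  rw [show k - k' = k - s - (k' - s) by ring]
  refine dyCube_eq_dilate_image fun i => ?_
  set x : ℕ → Bool := fun t => β (k - t) i
  have hdigits : ∑ t ∈ Finset.range s,
      (2 : ℝ) ^ t * (if relocate k k' p p' β (k' - t) i then 1 else 0)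
        = ∑ t ∈ Finset.range s, (2 : ℝ) ^ t * if addDigits (p' i - p i) x t then 1 else 0 := by
    simp only [relocate_sub_natCast, x]
  have hsum := congrArg (Int.cast : ℤ → ℝ) (add_sum_eq_addCarry_add_sum_addDigits (p' i - p i) x s)
  push_cast at hsum
  have e1 : (2 : ℝ) ^ (-(k' - s)) = 2 ^ (-k') * 2 ^ s := by
    rw [← zpow_natCast, ← zpow_add₀ two_ne_zero]; ring_nf
  have e2 : (2 : ℝ) ^ (k - s - (k' - s)) * 2 ^ (-(k - s)) = 2 ^ (-k') * 2 ^ s := by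
    rw [← zpow_natCast, ← zpow_add₀ two_ne_zero, ← zpow_add₀ two_ne_zero]; ring_nf
  have e3 : (2 : ℝ) ^ (k - s - (k' - s)) * 2 ^ (-k) = 2 ^ (-k') := by
    rw [← zpow_add₀ two_ne_zero]; ring_nf
  have e4 : (2 : ℝ) ^ (k - s - (k' - s)) = 2 ^ (k - k') := by ring_nf
  rw [betaShift_sub_natCast, betaShift_sub_natCast, hdigits,
    betaShift_eq_of_shift (relocate_add_one_add β) i]
  push_cast
  linear_combination (↑(q i) + ↑(addCarry (p' i - p i) x s)) * e1 - ↑(q i) * e2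
    - (∑ t ∈ Finset.range s, (2 : ℝ) ^ t * if x t then 1 else 0) * e3
    - 2 ^ (-k') * hsum - betaShift β k i * e4

theorem isGoodCube_relocate {r : ℕ} {γ : ℝ} (β : BSeq N) :
    IsGoodCube r γ β k p ↔ IsGoodCube r γ (relocate k k' p p' β) k' p' := by
  refine isGoodCube_iff_of_dilate ?_ fun s => ⟨Equiv.addRight _, dyCube_relocate β s⟩
  simpa [addCarry] using dyCube_relocate (k := k) (k' := k') (p := p) (p' := p') β 0 p

theorem IsBernoulli.measure_isGoodCube_eq {P : Measure (BSeq N)} (hP : IsBernoulli P)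
    (r : ℕ) (γ : ℝ) (k k' : ℤ) (p p' : Fin N → ℤ) :
    P {β | IsGoodCube r γ β k p} = P {β | IsGoodCube r γ β k' p'} := by
  have hpre : {β | IsGoodCube r γ β k p} = relocate k k' p p' ⁻¹' {β | IsGoodCube r γ β k' p'} :=
    Set.ext fun β => isGoodCube_relocate β
  rw [hpre, hP.measurePreserving_relocate.measure_preimage]
  exact (coordLE_le k' _ (measurableSet_isGoodCube r γ k' p')).nullMeasurableSet

end

theorem statement_10_general (N : ℕ) (r : ℕ) (γ : ℝ) (P : Measure (BSeq N)) (hP : IsBernoulli P)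
    (k : ℤ) (p : Fin N → ℤ) :
    MeasurableSet[coordLE N k] {β : BSeq N | IsGoodCube r γ β k p} ∧
    (∀ (k' : ℤ) (p' : Fin N → ℤ),
      P {β | IsGoodCube r γ β k p} = P {β | IsGoodCube r γ β k' p'}) ∧
    (∀ X : BSeq N → ℝ, (∃ M, ∀ β, |X β| ≤ M) → Measurable[coordGT N k] X →
      ∫ β, X β * Set.indicator {β' | IsGoodCube r γ β' k p} (fun _ => (1:ℝ)) β ∂P =
        (P {β | IsGoodCube r γ β k p}).toReal * ∫ β, X β ∂P) :=
  ⟨measurableSet_isGoodCube r γ k p, fun k' p' => hP.measure_isGoodCube_eq r γ k k' p p',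
    fun _ _ hX => (hP.indep_coordLE_coordGT k).symm.integral_mul_indicator (coordGT_le k)
      (coordLE_le k) hX (measurableSet_isGoodCube r γ k p)⟩

/-- goodness of `I ∔ β` depends only on the coordinates `β_j` with
`2^{-j} ≥ ℓ(I)`; its probability `π_good` is independent of `I`; and goodness is
independent of any bounded random variable depending only on the coordinates `β_j`
with `2^{-j} < ℓ(I)`. -/
theorem statement_10 (N : ℕ) (r : ℕ) (hr : 1 ≤ r) (γ : ℝ) (hγ0 : 0 < γ)
    (hγ2 : γ < 1/2) (P : Measure (BSeq N)) (hP : IsBernoulli P)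
    (k : ℤ) (p : Fin N → ℤ) :
    MeasurableSet[coordLE N k] {β : BSeq N | IsGoodCube r γ β k p} ∧
    (∀ (k' : ℤ) (p' : Fin N → ℤ),
      P {β | IsGoodCube r γ β k p} = P {β | IsGoodCube r γ β k' p'}) ∧
    (∀ X : BSeq N → ℝ, (∃ M, ∀ β, |X β| ≤ M) → Measurable[coordGT N k] X →
      ∫ β, X β * Set.indicator {β' | IsGoodCube r γ β' k p} (fun _ => (1:ℝ)) β ∂P =
        (P {β | IsGoodCube r γ β k p}).toReal * ∫ β, X β ∂P) :=
  statement_10_general N r γ P hP k p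
end
end

section
/- Let γ ∈ (0,1/2), let r ≥ 2 be an integer, let j ≥ 0 be an integer, and set θ(j) := ⌈(jγ + r)/(1−γ)⌉. Let K, J, I be axis-parallel cubes in ℝ^N with J ⊆ K, ℓ(J) = 2^{−j−θ(j)}ℓ(K), dist(J,∂K) ≥ ℓ(J)^γ ℓ(K)^{1−γ}, ℓ(I) ≤ ℓ(J), and D(I,J) := ℓ(I) + dist(I,J) + ℓ(J) ≤ 2^{j+1}ℓ(J). Then dist(I,∂K) ≥ (1/2)·ℓ(J)^γ ℓ(K)^{1−γ}, where all distances are taken in the ℓ^∞ metric. -/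
open MeasureTheory

noncomputable section

/-! The idea: since `J` is at distance at least `A := ℓ(J)^γ ℓ(K)^{1-γ}` from `∂K`, the triangle
inequality puts `I` at distance at least `A - ℓ(I) - dist(I,J) ≥ A + ℓ(J) - 2^{j+1} ℓ(J)` from `∂K`.
The choice of `θ(j)` makes `2^{j+1} ℓ(J) = 2^{1-θ(j)} ℓ(K)` at most `A / 2 = 2^{-(j+θ(j))γ - 1} ℓ(K)`,
because `θ(j)(1-γ) ≥ jγ + r ≥ jγ + 2`. -/

section

variable {N : ℕ}

theorem self_mem_cube (c : Euc N) {l : ℝ} (hl : 0 < l) : c ∈ cube c l :=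
  fun _ ↦ ⟨le_rfl, lt_add_of_pos_right _ hl⟩

theorem dist_le_of_mem_cube {c : Euc N} {l : ℝ} (hl : 0 ≤ l) {x y : Euc N}
    (hx : x ∈ cube c l) (hy : y ∈ cube c l) : dist x y ≤ l := by
  refine (dist_pi_le_iff hl).2 fun i ↦ ?_
  rw [Real.dist_eq, abs_le]
  constructor <;> linarith [hx i, hy i]

theorem setDist_nonneg (A B : Set (Euc N)) : 0 ≤ setDist A B :=
  Real.sInf_nonneg <| by rintro _ ⟨a, -, b, -, rfl⟩; exact dist_nonneg

theorem setDist_le_dist {A B : Set (Euc N)} {a b : Euc N} (ha : a ∈ A) (hb : b ∈ B) :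
    setDist A B ≤ dist a b :=
  csInf_le ⟨0, by rintro _ ⟨a, -, b, -, rfl⟩; exact dist_nonneg⟩ (Set.mem_image2_of_mem ha hb)

theorem setDist_empty_right (A : Set (Euc N)) : setDist A ∅ = 0 := by
  rw [setDist, Set.image2_empty_right, Real.sInf_empty]

theorem setDist_le_setDist_add {A B C : Set (Euc N)} (hA : A.Nonempty) (hB : B.Nonempty)
    {δ : ℝ} (hδ : ∀ x ∈ A, ∀ x' ∈ A, dist x x' ≤ δ) :
    setDist B C ≤ setDist A B + δ + setDist A C := by
  rcases C.eq_empty_or_nonempty with rfl | hC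
  · obtain ⟨a, ha⟩ := hA
    rw [setDist_empty_right, setDist_empty_right]
    linarith [setDist_nonneg A B, hδ a ha a ha, dist_self a]
  refine le_of_forall_pos_le_add fun ε hε ↦ ?_
  obtain ⟨_, ⟨x₀, hx₀, z₀, hz₀, rfl⟩, hclose⟩ :=
    Real.lt_sInf_add_pos (hA.image2 (f := dist) hB) hε
  change dist x₀ z₀ < setDist A B + ε at hclose
  have hfar : setDist B C - (setDist A B + ε + δ) ≤ setDist A C := by
    refine le_csInf (hA.image2 (f := dist) hC) ?_
    rintro _ ⟨x, hx, y, hy, rfl⟩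
    have hzy := setDist_le_dist hz₀ hy
    have hpath := dist_triangle4 z₀ x₀ x y
    linarith [dist_comm z₀ x₀, hδ x₀ hx₀ x hx]
  linarith

end

theorem add_le_ceil_div_mul {γ : ℝ} (hγ : γ < 1) (r j : ℤ) :
    j * γ + r ≤ (⌈(j * γ + r) / (1 - γ)⌉ : ℝ) * (1 - γ) :=
  (div_le_iff₀ (sub_pos.2 hγ)).1 (Int.le_ceil _)

theorem mul_rpow_mul_rpow_one_sub {t l : ℝ} (ht : 0 ≤ t) (hl : 0 ≤ l) (γ : ℝ) :
    (t * l) ^ γ * l ^ (1 - γ) = t ^ γ * l := by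
  rw [Real.mul_rpow ht hl, mul_assoc, ← Real.rpow_add' hl (by norm_num), add_sub_cancel,
    Real.rpow_one]

theorem two_zpow_succ_mul_le {γ : ℝ} (hγ : γ < 1) {r : ℤ} (hr : 2 ≤ r) {j : ℤ} {l lJ : ℝ}
    (hl : 0 ≤ l) (hlJ : lJ = (2 : ℝ) ^ (-j - ⌈(j * γ + r) / (1 - γ)⌉) * l) :
    2 ^ (j + 1) * lJ ≤ lJ ^ γ * l ^ (1 - γ) / 2 := by
  have hθ := add_le_ceil_div_mul hγ r j
  have hr' : (2 : ℝ) ≤ r := by exact_mod_cast hr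
  rw [hlJ, mul_rpow_mul_rpow_one_sub (by positivity) hl, ← mul_assoc, ← zpow_add₀ two_ne_zero,
    ← Real.rpow_intCast, ← Real.rpow_intCast, ← Real.rpow_mul zero_le_two, mul_div_right_comm,
    ← Real.rpow_sub_one two_ne_zero]
  gcongr
  · norm_num
  · push_cast
    linarith

theorem statement_12_general (N : ℕ) (γ : ℝ) (hγ2 : γ < 1/2)
    (r : ℤ) (hr : 2 ≤ r) (j : ℤ)
    (cK cJ cI : Euc N) (lK lJ lI : ℝ) (hlK : 0 < lK) (hlJ : 0 < lJ) (hlI : 0 < lI)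
    (hsize : lJ = (2:ℝ) ^ (-j - ⌈(j * γ + r) / (1 - γ)⌉) * lK)
    (hgood : lJ ^ γ * lK ^ (1 - γ) ≤ setDist (cube cJ lJ) (frontier (cube cK lK)))
    (hD : lI + setDist (cube cI lI) (cube cJ lJ) + lJ ≤ 2 ^ (j + 1) * lJ) :
    (1/2) * lJ ^ γ * lK ^ (1 - γ) ≤ setDist (cube cI lI) (frontier (cube cK lK)) := by
  have htri := setDist_le_setDist_add (C := frontier (cube cK lK)) ⟨cI, self_mem_cube cI hlI⟩
    ⟨cJ, self_mem_cube cJ hlJ⟩ fun _ hx _ hx' ↦ dist_le_of_mem_cube hlI.le hx hx'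
  have hscale := two_zpow_succ_mul_le (by linarith) hr hlK.le hsize
  linarith

/-- the smaller cube `I` of a pair `(I,J)` appearing in `σ_out^{ij}` is
far from the boundary of `K = I^{(i+j+θ(j))}`. -/
theorem statement_12 (N : ℕ) (γ : ℝ) (hγ0 : 0 < γ) (hγ2 : γ < 1/2)
    (r : ℤ) (hr : 2 ≤ r) (j : ℤ) (hj : 0 ≤ j)
    (cK cJ cI : Euc N) (lK lJ lI : ℝ) (hlK : 0 < lK) (hlJ : 0 < lJ) (hlI : 0 < lI)
    (hJK : cube cJ lJ ⊆ cube cK lK)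
    (hsize : lJ = (2:ℝ) ^ (-j - ⌈(j * γ + r) / (1 - γ)⌉) * lK)
    (hgood : lJ ^ γ * lK ^ (1 - γ) ≤ setDist (cube cJ lJ) (frontier (cube cK lK)))
    (hIJ : lI ≤ lJ)
    (hD : lI + setDist (cube cI lI) (cube cJ lJ) + lJ ≤ 2 ^ (j + 1) * lJ) :
    (1/2) * lJ ^ γ * lK ^ (1 - γ) ≤ setDist (cube cI lI) (frontier (cube cK lK)) :=
  statement_12_general N γ hγ2 r hr j cK cJ cI lK lJ lI hlK hlJ hlI hsize hgood hD
end
end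

section
/- Let K and Q be axis-parallel cubes in ℝ^N with ℓ(Q) > ℓ(K), let δ ∈ (0,1], and suppose there exists a point x ∈ K ∩ Q with dist(x, ∂K) ≥ δ·ℓ(K) in the ℓ^∞ metric. Then K ∩ Q contains a cube of sidelength δ·ℓ(K); in particular the Lebesgue measure satisfies |K ∩ Q| ≥ δ^N·|K|. -/
open MeasureTheory

noncomputable section

/-!
Since the metric is `ℓ^∞`, moving a single coordinate of `x` onto a face of `K` reaches `∂K`,
so `dist(x, ∂K) ≥ δ ℓ(K)` keeps `x` at distance `δ ℓ(K)` from every face of `K` coordinatewise.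
In each coordinate the interval of length `δ ℓ(K)` starting at `min (x i) (b_i - δ ℓ(K))`,
with `b_i` the right end of `Q_i`, then lies in both `K_i` and `Q_i` (it fits in `Q_i` because
`2 δ ℓ(K) ≤ ℓ(K) < ℓ(Q)`), and the product of these intervals is the required cube.
-/

lemma dist_update_self_right {ι : Type*} [Fintype ι] [DecidableEq ι] {X : ι → Type*}
    [∀ i, PseudoMetricSpace (X i)] (x : ∀ i, X i) (i : ι) (t : X i) :
    dist x (Function.update x i t) = dist (x i) t := by
  refine le_antisymm ((dist_pi_le_iff dist_nonneg).2 fun j => ?_) ?_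
  · rcases eq_or_ne j i with rfl | hj
    · rw [Function.update_self]
    · rw [Function.update_of_ne hj, dist_self]
      exact dist_nonneg
  · simpa using dist_le_pi_dist x (Function.update x i t) i

section Cube

variable {N : ℕ}

lemma cube_eq_pi (c : Euc N) (l : ℝ) :
    cube c l = Set.univ.pi fun i => Set.Ico (c i) (c i + l) := by
  ext y
  simp [cube, Set.mem_pi]

lemma volume_cube (c : Euc N) (l : ℝ) : volume (cube c l) = ENNReal.ofReal l ^ N := by
  rw [cube_eq_pi, volume_pi_pi]
  simp [Real.volume_Ico]

lemma frontier_cube {c : Euc N} {l : ℝ} (hl : 0 < l) :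
    frontier (cube c l) =
      (Set.univ.pi fun i => Set.Icc (c i) (c i + l)) \
        Set.univ.pi fun i => Set.Ioo (c i) (c i + l) := by
  have hne : ∀ i, c i ≠ c i + l := fun i => (lt_add_of_pos_right _ hl).ne
  rw [frontier, cube_eq_pi, closure_pi_set, interior_pi_set Set.finite_univ]
  simp only [closure_Ico (hne _), interior_Ico]

lemma update_mem_frontier_cube {c x : Euc N} {l : ℝ} (hx : x ∈ cube c l) (i : Fin N) {t : ℝ}
    (ht : t = c i ∨ t = c i + l) : Function.update x i t ∈ frontier (cube c l) := by
  have hl : 0 < l := by linarith [hx i]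
  rw [frontier_cube hl]
  refine ⟨fun j _ => ?_, fun hmem => ?_⟩
  · rcases eq_or_ne j i with rfl | hj
    · rw [Function.update_self]
      rcases ht with rfl | rfl <;> constructor <;> linarith
    · rw [Function.update_of_ne hj]
      exact ⟨(hx j).1, (hx j).2.le⟩
  · have := hmem i (Set.mem_univ i)
    rw [Function.update_self] at this
    rcases ht with rfl | rfl
    · exact lt_irrefl _ this.1
    · exact lt_irrefl _ this.2

lemma add_le_of_le_infDist_frontier_cube {c x : Euc N} {l r : ℝ} (hx : x ∈ cube c l)
    (hr : r ≤ Metric.infDist x (frontier (cube c l))) (i : Fin N) :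
    c i + r ≤ x i ∧ x i + r ≤ c i + l := by
  have hdist : ∀ t, (t = c i ∨ t = c i + l) → r ≤ |x i - t| := fun t ht =>
    calc r ≤ Metric.infDist x (frontier (cube c l)) := hr
      _ ≤ dist x (Function.update x i t) :=
        Metric.infDist_le_dist_of_mem (update_mem_frontier_cube hx i ht)
      _ = |x i - t| := by rw [dist_update_self_right, Real.dist_eq]
  have hlow := hdist _ (Or.inl rfl)
  have hhigh := hdist _ (Or.inr rfl)
  rw [abs_of_nonneg (by linarith [hx i])] at hlow
  rw [abs_of_neg (by linarith [hx i])] at hhigh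
  constructor <;> linarith

lemma exists_cube_subset_inter {cK cQ x : Euc N} {lK lQ r : ℝ}
    (hx : x ∈ cube cK lK ∩ cube cQ lQ) (hK : ∀ i, cK i + r ≤ x i ∧ x i + r ≤ cK i + lK)
    (hlQ : lK ≤ lQ) : ∃ c : Euc N, cube c r ⊆ cube cK lK ∩ cube cQ lQ := by
  set c : Euc N := fun i => min (x i) (cQ i + lQ - r)
  have hc : ∀ i, cK i ≤ c i ∧ cQ i ≤ c i ∧ c i ≤ x i ∧ c i + r ≤ cQ i + lQ := fun i => by
    have := hK i
    have := hx.1 i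
    have := hx.2 i
    exact ⟨le_min (by linarith) (by linarith), le_min (by linarith) (by linarith),
      min_le_left _ _, by linarith [min_le_right (x i) (cQ i + lQ - r)]⟩
  refine ⟨c, fun y hy => ⟨fun i => ?_, fun i => ?_⟩⟩ <;>
  · have := hK i
    have := hc i
    have := hy i
    constructor <;> linarith

end Cube

theorem statement_14_general (N : ℕ) (cK cQ : Euc N) (lK lQ : ℝ) (hlQ : lK < lQ)
    (δ : ℝ) (hδ0 : 0 < δ)
    (x : Euc N) (hx : x ∈ cube cK lK ∩ cube cQ lQ)
    (hdist : δ * lK ≤ Metric.infDist x (frontier (cube cK lK))) :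
    (∃ c : Euc N, cube c (δ * lK) ⊆ cube cK lK ∩ cube cQ lQ) ∧
      ENNReal.ofReal (δ ^ N) * volume (cube cK lK) ≤ volume (cube cK lK ∩ cube cQ lQ) := by
  obtain ⟨c, hc⟩ := exists_cube_subset_inter
    hx (add_le_of_le_infDist_frontier_cube hx.1 hdist) hlQ.le
  refine ⟨⟨c, hc⟩, ?_⟩
  calc ENNReal.ofReal (δ ^ N) * volume (cube cK lK) = volume (cube c (δ * lK)) := by
        rw [volume_cube, volume_cube, ENNReal.ofReal_mul hδ0.le, mul_pow,
          ENNReal.ofReal_pow hδ0.le]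
    _ ≤ volume (cube cK lK ∩ cube cQ lQ) := measure_mono hc

/-- if a point of `K ∩ Q` is at `ℓ^∞`-distance at least `δ·ℓ(K)` from `∂K`
and `ℓ(Q) > ℓ(K)`, then `K ∩ Q` contains a cube of sidelength `δ·ℓ(K)`; in particular
`|K ∩ Q| ≥ δ^N |K|`. -/
theorem statement_14 (N : ℕ) (cK cQ : Euc N) (lK lQ : ℝ) (hlK : 0 < lK) (hlQ : lK < lQ)
    (δ : ℝ) (hδ0 : 0 < δ) (hδ1 : δ ≤ 1)
    (x : Euc N) (hx : x ∈ cube cK lK ∩ cube cQ lQ)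
    (hdist : δ * lK ≤ Metric.infDist x (frontier (cube cK lK))) :
    (∃ c : Euc N, cube c (δ * lK) ⊆ cube cK lK ∩ cube cQ lQ) ∧
      ENNReal.ofReal (δ ^ N) * volume (cube cK lK) ≤ volume (cube cK lK ∩ cube cQ lQ) :=
  statement_14_general N cK cQ lK lQ hlQ δ hδ0 x hx hdist
end
end
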